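/- Let H be a real Hilbert space with inner product (·,·), and let S_h ⊆ H be a closed subspace with orthogonal projection P₀ : H → S_h. Let ‖·‖₁ be another norm on H and assume the stability bound ‖P₀ z‖₁ ≤ C₀ ‖z‖₁ for all z ∈ H with C₀ > 0. Define the dual norm ‖μ‖_Λ = sup over nonzero z ∈ H of (μ, z)/‖z‖₁. Then for every μ in a subspace Λ_h ⊆ S_h, one has sup over nonzero z_h ∈ S_h of (μ, z_h)/‖z_h‖₁ ≥ (1/C₀) ‖μ‖_Λ. -/

import Mathlib

/-!
For `μ ∈ S_h` the pairing does not see the projection: `(μ, z) = (μ, P₀ z)`. Hence every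
positive quotient `(μ, z)/‖z‖₁` is bounded by `C₀ (μ, P₀ z)/‖P₀ z‖₁`, a quotient over `S_h`,
because `‖P₀ z‖₁ ≤ C₀ ‖z‖₁`.
-/

open RealInnerProductSpace

/-- `hbdd` guards against the junk value `sSup B = 0` of an unbounded `B`. -/
theorem Real.sSup_le_mul_sSup {A B : Set ℝ} {c : ℝ} (hc : 0 ≤ c) (hA : 0 ≤ sSup A)
    (hbdd : BddAbove B → BddAbove A) (h : ∀ b ∈ B, 0 < b → ∃ a ∈ A, b ≤ c * a) :
    sSup B ≤ c * sSup A := by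
  by_cases hA' : BddAbove A
  · refine Real.sSup_le (fun b hb => ?_) (mul_nonneg hc hA)
    rcases le_or_gt b 0 with hb0 | hb0
    · exact hb0.trans (mul_nonneg hc hA)
    · obtain ⟨a, ha, hba⟩ := h b hb hb0
      exact hba.trans (mul_le_mul_of_nonneg_left (le_csSup hA' ha) hc)
  · rw [Real.sSup_of_not_bddAbove (mt hbdd hA'), Real.sSup_of_not_bddAbove hA', mul_zero]

theorem div_le_mul_div_of_le_mul {a m p c : ℝ} (ha : 0 ≤ a) (hm : 0 < m) (hp : 0 < p)
    (hpm : p ≤ c * m) : a / m ≤ c * (a / p) := by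
  rw [mul_div_assoc', div_le_div_iff₀ hm hp]
  nlinarith [mul_le_mul_of_nonneg_left hpm ha]

section DualQuotient

variable {H : Type*} [NormedAddCommGroup H] [InnerProductSpace ℝ H] {n : H → ℝ}
  {K : Submodule ℝ H} {μ : H}

theorem Submodule.inner_orthogonalProjectionOnto_right_of_mem [K.HasOrthogonalProjection]
    (hμ : μ ∈ K) (z : H) : ⟪μ, (K.orthogonalProjectionOnto z : H)⟫ = ⟪μ, z⟫ :=
  (K.coe_inner _ _).symm.trans (K.inner_orthogonalProjectionOnto_eq_of_mem_left ⟨μ, hμ⟩ z)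

theorem sSup_inner_div_nonneg (hn : ∀ z : H, z ≠ 0 → 0 < n z) (hμ : μ ∈ K) :
    0 ≤ sSup {r : ℝ | ∃ z ∈ K, z ≠ 0 ∧ r = ⟪μ, z⟫ / n z} := by
  rcases eq_or_ne μ 0 with rfl | hμ0
  · refine Real.sSup_nonneg ?_
    rintro _ ⟨z, -, -, rfl⟩
    simp
  · exact Real.sSup_nonneg'
      ⟨_, ⟨μ, hμ, hμ0, rfl⟩, (div_pos (real_inner_self_pos.2 hμ0) (hn μ hμ0)).le⟩

theorem exists_inner_div_orthogonalProjectionOnto_ge [K.HasOrthogonalProjection]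
    (hn : ∀ z : H, z ≠ 0 → 0 < n z) {C : ℝ} {z : H}
    (hstab : n (K.orthogonalProjectionOnto z : H) ≤ C * n z) (hμ : μ ∈ K) (hz : z ≠ 0)
    (hpos : 0 < ⟪μ, z⟫) :
    ∃ a ∈ {r : ℝ | ∃ w ∈ K, w ≠ 0 ∧ r = ⟪μ, w⟫ / n w}, ⟪μ, z⟫ / n z ≤ C * a := by
  set w : H := ↑(K.orthogonalProjectionOnto z)
  have hw : ⟪μ, w⟫ = ⟪μ, z⟫ := K.inner_orthogonalProjectionOnto_right_of_mem hμ z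
  have hw0 : w ≠ 0 := fun h => by simp [← hw, h] at hpos
  refine ⟨_, ⟨w, (K.orthogonalProjectionOnto z).2, hw0, rfl⟩, ?_⟩
  rw [hw]
  exact div_le_mul_div_of_le_mul hpos.le (hn z hz) (hn w hw0) hstab

end DualQuotient

theorem infsup_of_projection_stability_general {H : Type*} [NormedAddCommGroup H]
    [InnerProductSpace ℝ H]
    (Sh : Submodule ℝ H) [CompleteSpace Sh]
    (n1 : H → ℝ) (hn1 : ∀ z : H, z ≠ 0 → 0 < n1 z)
    (C₀ : ℝ) (hC₀ : 0 < C₀)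
    (hstab : ∀ z : H, n1 ((Sh.orthogonalProjection z : H)) ≤ C₀ * n1 z)
    (Λh : Submodule ℝ H) (hΛS : Λh ≤ Sh) :
    ∀ μ ∈ Λh,
      sSup {r : ℝ | ∃ z ∈ Sh, z ≠ 0 ∧ r = ⟪μ, z⟫ / n1 z} ≥
        (1 / C₀) * sSup {r : ℝ | ∃ z : H, z ≠ 0 ∧ r = ⟪μ, z⟫ / n1 z} := by
  intro μ hμ
  have hμS : μ ∈ Sh := hΛS hμ
  rw [ge_iff_le, one_div, inv_mul_le_iff₀ hC₀]
  refine Real.sSup_le_mul_sSup hC₀.le (sSup_inner_div_nonneg hn1 hμS) (fun hB => hB.mono ?_) ?_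
  · rintro _ ⟨z, -, hz, rfl⟩
    exact ⟨z, hz, rfl⟩
  · rintro _ ⟨z, hz, rfl⟩ hpos
    exact exists_inner_div_orthogonalProjectionOnto_ge hn1 (hstab z) hμS hz
      ((div_pos_iff_of_pos_right (hn1 z hz)).1 hpos)

/-- `H¹`-stability of the `L²`-projection implies the inf-sup condition: if
`‖P₀ z‖₁ ≤ C₀ ‖z‖₁` for all `z`, then for `μ` in a subspace `Λ_h ⊆ S_h`,
`sup_{z_h ∈ S_h} (μ, z_h)/‖z_h‖₁ ≥ (1/C₀) ‖μ‖_Λ`, where `‖μ‖_Λ` is the dual norm. -/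
theorem infsup_of_projection_stability {H : Type*} [NormedAddCommGroup H]
    [InnerProductSpace ℝ H] [CompleteSpace H]
    (Sh : Submodule ℝ H) [CompleteSpace Sh]
    (n1 : H → ℝ) (hn1 : ∀ z : H, z ≠ 0 → 0 < n1 z)
    (C₀ : ℝ) (hC₀ : 0 < C₀)
    (hstab : ∀ z : H, n1 ((Sh.orthogonalProjection z : H)) ≤ C₀ * n1 z)
    (Λh : Submodule ℝ H) (hΛS : Λh ≤ Sh) :
    ∀ μ ∈ Λh,
      sSup {r : ℝ | ∃ z ∈ Sh, z ≠ 0 ∧ r = ⟪μ, z⟫ / n1 z} ≥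
        (1 / C₀) * sSup {r : ℝ | ∃ z : H, z ≠ 0 ∧ r = ⟪μ, z⟫ / n1 z} :=
  infsup_of_projection_stability_general Sh n1 hn1 C₀ hC₀ hstab Λh hΛS
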